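/- For the fixed points u± = 1/2 ± √((1−b)³(1−3b)) / (2(1−b)³) of the marked majority voting function g× with marking probability b, one has the asymptotic expansions u− = (3/4)b² + O(b³) and u+ = 1 − (3/4)b² + O(b³) as b → 0. -/
import Mathlib

noncomputable def uMinus (b : ℝ) : ℝ :=
  1/2 - Real.sqrt ((1-b)^3 * (1-3*b)) / (2*(1-b)^3)

noncomputable def uPlus (b : ℝ) : ℝ :=
  1/2 + Real.sqrt ((1-b)^3 * (1-3*b)) / (2*(1-b)^3)

set_option maxHeartbeats 1000000 in
theorem stmt10 :
    ∃ C > (0:ℝ), ∃ b₀ > (0:ℝ), ∀ b : ℝ, 0 < b → b < b₀ →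
      |uMinus b - 3/4 * b^2| ≤ C * b^3 ∧
      |uPlus b - (1 - 3/4 * b^2)| ≤ C * b^3 := by
  refine ⟨5, by norm_num, 1/100, by norm_num, fun b hb hb' => ?_⟩
  have h1 : (0:ℝ) < 1 - b := by linarith
  have h3 : (0:ℝ) < 1 - 3*b := by linarith
  have hy : (0:ℝ) ≤ (1-b)^3 * (1-3*b) := by positivity
  have hs0 : 0 ≤ Real.sqrt ((1-b)^3 * (1-3*b)) := Real.sqrt_nonneg _
  have hs2 : (Real.sqrt ((1-b)^3 * (1-3*b)))^2 = (1-b)^3 * (1-3*b) := Real.sq_sqrt hy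
  set s := Real.sqrt ((1-b)^3 * (1-3*b)) with hsdef
  set x : ℝ := (1-b)^3 * (1 - 3/2*b^2) with hx
  have hq : (0:ℝ) < 1 - 3/2*b^2 := by nlinarith
  have hx0 : (0:ℝ) < x := by positivity
  have hxlb : (8:ℝ)/9 ≤ x := by nlinarith
  have hsq : |x - s| * (x + s) = |x^2 - s^2| := by
    rw [← abs_of_nonneg (by linarith : (0:ℝ) ≤ x + s), ← abs_mul]
    ring_nf
  have hfact : x^2 - s^2 = b^3 * ((1-b)^3 * (8 - 27/4*b - 15/4*b^2 + 27/4*b^3 - 9/4*b^4)) := by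
    rw [hs2]; ring
  have hq0 : (0:ℝ) ≤ 8 - 27/4*b - 15/4*b^2 + 27/4*b^3 - 9/4*b^4 := by nlinarith
  have hq8 : 8 - 27/4*b - 15/4*b^2 + 27/4*b^3 - 9/4*b^4 ≤ 8 := by nlinarith
  have hle1 : (1-b)^3 ≤ 1 := pow_le_one₀ (n:=3) h1.le (by linarith)
  have hinner1 : (0:ℝ) ≤ (1-b)^3 * (8 - 27/4*b - 15/4*b^2 + 27/4*b^3 - 9/4*b^4) :=
    mul_nonneg (pow_pos h1 3).le hq0
  have hinner2 : (1-b)^3 * (8 - 27/4*b - 15/4*b^2 + 27/4*b^3 - 9/4*b^4) ≤ 8 :=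
    le_trans (mul_le_of_le_one_left hq0 hle1) hq8
  have hbound : |x^2 - s^2| ≤ 8 * b^3 := by
    rw [hfact, abs_le]
    have hb3 : (0:ℝ) < b^3 := pow_pos hb 3
    constructor
    · linarith [mul_nonneg hb3.le hinner1]
    · linarith [mul_le_mul_of_nonneg_left hinner2 hb3.le]
  have hxs : (8:ℝ)/9 ≤ x + s := by linarith
  have key : |x - s| ≤ 9 * b^3 := by
    have h := mul_le_mul_of_nonneg_left hxs (abs_nonneg (x - s))
    linarith [hsq, hbound]
  have hden : (0:ℝ) < 2*(1-b)^3 := by positivity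
  have hne : ((1:ℝ)-b)^3 ≠ 0 := by positivity
  have hxdiv : x / (2*(1-b)^3) = 1/2 - 3/4*b^2 := by
    rw [hx]
    field_simp
    ring
  have hum : uMinus b - 3/4 * b^2 = (x - s) / (2*(1-b)^3) := by
    rw [uMinus, ← hsdef, sub_div, hxdiv]
    ring
  have hup : uPlus b - (1 - 3/4 * b^2) = -((x - s) / (2*(1-b)^3)) := by
    rw [uPlus, ← hsdef, sub_div, hxdiv]
    ring
  clear_value x s
  have habs : |(x - s) / (2*(1-b)^3)| ≤ 5 * b^3 := by
    rw [abs_div, abs_of_pos hden, div_le_iff₀ hden]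
    have h10 : (9:ℝ) ≤ 10*(1-b)^3 := by nlinarith
    have hb3 : (0:ℝ) < b^3 := pow_pos hb 3
    nlinarith [mul_le_mul_of_nonneg_left h10 hb3.le]
  constructor
  · rw [hum]; exact habs
  · rw [hup, abs_neg]; exact habs
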